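/- For all continuous w_1, w_2 : [0,T] → ℝ, writing ‖g‖ = sup_{t∈[0,T]} |g(t)| and P_k = ∏_{l=1}^{k} f_{n+1−l}, one has ‖Φ_n[w_1] − Φ_n[w_2]‖ ≤ Σ_{k=1}^{n} ( ‖Φ_{n−k}[w_1]‖ · ‖w_1^k − w_2^k‖ / k! + ‖Φ_{n−k}[w_1] − Φ_{n−k}[w_2]‖ · ‖w_2‖^k / k! ) · ( ‖P_k‖ + T ‖P_k'‖ ). -/

import Mathlib

/-!
Subtracting the recursions for `Φ_n[w₁]` and `Φ_n[w₂]` term by term, each summand involves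
`Φ_{n-k}[w₁] w₁^k - Φ_{n-k}[w₂] w₂^k
  = Φ_{n-k}[w₁] (w₁^k - w₂^k) + (Φ_{n-k}[w₁] - Φ_{n-k}[w₂]) w₂^k`,
multiplied either by `P_k(t)` or, under an integral over `[0, t] ⊆ [0, T]`, by `P_k'`. Bounding
every factor by its sup norm gives the estimate pointwise, hence for the supremum. The sup norms
are finite because all functions involved are continuous on `[0, T]`: the `Φ_j[w]` by strong
induction on `j`, and `P_k'` because `P_k` is `C¹`.
-/

open MeasureTheory Set

lemma abs_le_iSup_abs_of_continuousOn {α : Type*} [TopologicalSpace α] {s : Set α}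
    (hs : IsCompact s) {g : α → ℝ} (hg : ContinuousOn g s) {t : α} (ht : t ∈ s) :
    |g t| ≤ ⨆ x : s, |g x| := by
  have hbdd := (hs.image_of_continuousOn hg.abs).bddAbove
  rw [image_eq_range] at hbdd
  exact le_ciSup hbdd ⟨t, ht⟩

lemma ContDiffOn.continuousOn_of_hasDerivWithinAt {𝕜 F : Type*} [NontriviallyNormedField 𝕜]
    [NormedAddCommGroup F] [NormedSpace 𝕜 F] {s : Set 𝕜} {g g' : 𝕜 → F}
    (hg : ContDiffOn 𝕜 1 g s) (hs : UniqueDiffOn 𝕜 s)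
    (hg' : ∀ t ∈ s, HasDerivWithinAt g (g' t) s t) : ContinuousOn g' s :=
  (hg.continuousOn_derivWithin hs le_rfl).congr fun t ht => ((hg' t ht).derivWithin (hs t ht)).symm

lemma ContinuousOn.continuousOn_primitive_Icc {E : Type*} [NormedAddCommGroup E]
    [NormedSpace ℝ E] {a b : ℝ} {g : ℝ → E} (hg : ContinuousOn g (Icc a b)) :
    ContinuousOn (fun x => ∫ t in a..x, g t) (Icc a b) := by
  rcases le_or_gt a b with hab | hab
  · have hint := hg.integrableOn_Icc (μ := volume)
    rw [← uIcc_of_le hab] at hint ⊢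
    exact intervalIntegral.continuousOn_primitive_interval hint
  · simp [Icc_eq_empty_of_lt hab]

lemma abs_intervalIntegral_le_mul_of_abs_le {T C t : ℝ} {g : ℝ → ℝ} (ht : t ∈ Icc 0 T)
    (hg : ∀ s ∈ Icc 0 T, |g s| ≤ C) : |∫ s in 0..t, g s| ≤ T * C := by
  have hC : 0 ≤ C := (abs_nonneg _).trans (hg t ht)
  have hbound : ∀ s ∈ uIoc 0 t, ‖g s‖ ≤ C := fun s hs => by
    rw [uIoc_of_le ht.1] at hs
    exact hg s ⟨hs.1.le, hs.2.trans ht.2⟩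
  calc |∫ s in 0..t, g s| ≤ C * |t - 0| := intervalIntegral.norm_integral_le_of_norm_le_const hbound
    _ = t * C := by rw [sub_zero, abs_of_nonneg ht.1, mul_comm]
    _ ≤ T * C := mul_le_mul_of_nonneg_right ht.2 hC

lemma abs_mul_sub_mul_le {α : Type*} [CommRing α] [LinearOrder α] [IsStrictOrderedRing α]
    (a b c d : α) : |a * b - c * d| ≤ |a| * |b - d| + |a - c| * |d| := by
  calc |a * b - c * d| = |a * (b - d) + (a - c) * d| := by ring_nf
    _ ≤ |a| * |b - d| + |a - c| * |d| := by rw [← abs_mul, ← abs_mul]; exact abs_add_le _ _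

lemma abs_neg_one_pow_mul_mul_mul_sub {α : Type*} [CommRing α] [LinearOrder α]
    [IsStrictOrderedRing α] (m : ℕ) (a₁ a₂ b₁ b₂ p : α) :
    |(-1) ^ m * a₁ * b₁ * p - (-1) ^ m * a₂ * b₂ * p| = |a₁ * b₁ - a₂ * b₂| * |p| := by
  rw [show (-1) ^ m * a₁ * b₁ * p - (-1) ^ m * a₂ * b₂ * p
      = (-1) ^ m * ((a₁ * b₁ - a₂ * b₂) * p) by ring, abs_mul, abs_neg_one_pow, one_mul, abs_mul]

lemma abs_sum_add_sum_sub_le {ι α : Type*} [AddCommGroup α] [LinearOrder α]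
    [IsOrderedAddMonoid α] (s : Finset ι) (a b a' b' : ι → α) :
    |(∑ i ∈ s, a i + ∑ i ∈ s, b i) - (∑ i ∈ s, a' i + ∑ i ∈ s, b' i)|
      ≤ ∑ i ∈ s, (|a i - a' i| + |b i - b' i|) := by
  rw [add_sub_add_comm, ← Finset.sum_sub_distrib, ← Finset.sum_sub_distrib,
    Finset.sum_add_distrib]
  exact (abs_add_le _ _).trans
    (add_le_add (Finset.abs_sum_le_sum_abs _ _) (Finset.abs_sum_le_sum_abs _ _))

lemma abs_mul_pow_div_factorial_sub_le {x₁ x₂ y₁ y₂ A B C D : ℝ} (k : ℕ) (hx₁ : |x₁| ≤ A)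
    (hx : |x₁ - x₂| ≤ B) (hy : |y₁ ^ k - y₂ ^ k| ≤ C) (hy₂ : |y₂| ≤ D) :
    |x₁ * (y₁ ^ k / k.factorial) - x₂ * (y₂ ^ k / k.factorial)|
      ≤ A * C / k.factorial + B * D ^ k / k.factorial := by
  have hk : (0 : ℝ) < k.factorial := by positivity
  rw [← add_div, ← mul_div_assoc, ← mul_div_assoc, ← sub_div, abs_div, abs_of_pos hk]
  have hA : 0 ≤ A := (abs_nonneg _).trans hx₁
  have hB : 0 ≤ B := (abs_nonneg _).trans hx
  gcongr
  calc |x₁ * y₁ ^ k - x₂ * y₂ ^ k| ≤ |x₁| * |y₁ ^ k - y₂ ^ k| + |x₁ - x₂| * |y₂| ^ k := by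
        rw [← abs_pow]; exact abs_mul_sub_mul_le _ _ _ _
    _ ≤ A * C + B * D ^ k := by gcongr


section Recursion

variable {T : ℝ} {n : ℕ} {f : ℕ → ℝ → ℝ} {fd : ℕ → ℕ → ℝ → ℝ}

noncomputable def shiftedProd (f : ℕ → ℝ → ℝ) (j k : ℕ) (t : ℝ) : ℝ :=
  ∏ l ∈ Finset.Icc 1 k, f (j + 1 - l) t

/-- The right-hand side of the recursion for `Φ_j[u]`; `fd j k` stands for `P_{j,k}'`. -/
noncomputable def phiRHS (f : ℕ → ℝ → ℝ) (fd : ℕ → ℕ → ℝ → ℝ) (u : ℝ → ℝ) (φ : ℕ → ℝ → ℝ) (j : ℕ)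
    (t : ℝ) : ℝ :=
  (∑ k ∈ Finset.Icc 1 j,
      (-1 : ℝ) ^ (k + 1) * φ (j - k) t * (u t ^ k / (Nat.factorial k : ℝ)) * shiftedProd f j k t)
    + ∑ k ∈ Finset.Icc 1 j,
      (-1 : ℝ) ^ k * ∫ s in (0:ℝ)..t, φ (j - k) s * (u s ^ k / (Nat.factorial k : ℝ)) * fd j k s

lemma contDiffOn_shiftedProd {s : Set ℝ} (hf : ∀ i, 1 ≤ i → i ≤ n → ContDiffOn ℝ 1 (f i) s)
    {j k : ℕ} (hkj : k ≤ j) (hjn : j ≤ n) : ContDiffOn ℝ 1 (shiftedProd f j k) s :=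
  contDiffOn_prod fun l hl => hf (j + 1 - l) (by simp at hl; omega) (by simp at hl; omega)

lemma continuousOn_phiRHS {u : ℝ → ℝ} {φ : ℕ → ℝ → ℝ} {j : ℕ}
    (hu : ContinuousOn u (Icc 0 T))
    (hφ : ∀ k ∈ Finset.Icc 1 j, ContinuousOn (φ (j - k)) (Icc 0 T))
    (hP : ∀ k ∈ Finset.Icc 1 j, ContinuousOn (shiftedProd f j k) (Icc 0 T))
    (hfd : ∀ k ∈ Finset.Icc 1 j, ContinuousOn (fd j k) (Icc 0 T)) :
    ContinuousOn (phiRHS f fd u φ j) (Icc 0 T) := by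
  refine (continuousOn_finsetSum _ fun k hk => ?_).add
    (continuousOn_finsetSum _ fun k hk => ?_)
  · exact ((continuousOn_const.mul (hφ k hk)).mul ((hu.pow k).div_const _)).mul (hP k hk)
  · exact continuousOn_const.mul
      (((hφ k hk).mul ((hu.pow k).div_const _)).mul (hfd k hk)).continuousOn_primitive_Icc

lemma continuousOn_of_eq_phiRHS {u : ℝ → ℝ} {φ : ℕ → ℝ → ℝ}
    (hu : ContinuousOn u (Icc 0 T))
    (hP : ∀ j ≤ n, ∀ k ∈ Finset.Icc 1 j, ContinuousOn (shiftedProd f j k) (Icc 0 T))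
    (hfd : ∀ j ≤ n, ∀ k ∈ Finset.Icc 1 j, ContinuousOn (fd j k) (Icc 0 T))
    (hφ0 : ∀ t, φ 0 t = 1)
    (hφ : ∀ j, 1 ≤ j → j ≤ n → ∀ t ∈ Icc 0 T, φ j t = phiRHS f fd u φ j t) :
    ∀ j ≤ n, ContinuousOn (φ j) (Icc 0 T) := by
  intro j
  induction j using Nat.strong_induction_on with
  | _ j ih =>
    intro hjn
    rcases Nat.eq_zero_or_pos j with rfl | hj
    · exact continuousOn_const.congr fun t _ => hφ0 t
    · refine (continuousOn_phiRHS hu (fun k hk => ?_) (hP j hjn) (hfd j hjn)).congr (hφ j hj hjn)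
      rw [Finset.mem_Icc] at hk
      exact ih (j - k) (by omega) (by omega)

lemma abs_sub_add_abs_integral_sub_le {N : (ℝ → ℝ) → ℝ}
    (hN : ∀ g, ContinuousOn g (Icc 0 T) → ∀ t ∈ Icc 0 T, |g t| ≤ N g)
    {a₁ a₂ w₁ w₂ P q : ℝ → ℝ} (ha₁ : ContinuousOn a₁ (Icc 0 T)) (ha₂ : ContinuousOn a₂ (Icc 0 T))
    (hw₁ : ContinuousOn w₁ (Icc 0 T)) (hw₂ : ContinuousOn w₂ (Icc 0 T))
    (hP : ContinuousOn P (Icc 0 T)) (hq : ContinuousOn q (Icc 0 T)) (k : ℕ) {t : ℝ}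
    (ht : t ∈ Icc 0 T) :
    |(-1 : ℝ) ^ (k + 1) * a₁ t * (w₁ t ^ k / k.factorial) * P t
          - (-1 : ℝ) ^ (k + 1) * a₂ t * (w₂ t ^ k / k.factorial) * P t|
        + |(-1 : ℝ) ^ k * (∫ s in (0:ℝ)..t, a₁ s * (w₁ s ^ k / k.factorial) * q s)
          - (-1 : ℝ) ^ k * (∫ s in (0:ℝ)..t, a₂ s * (w₂ s ^ k / k.factorial) * q s)|
      ≤ (N a₁ * N (fun t => w₁ t ^ k - w₂ t ^ k) / k.factorial
          + N (fun t => a₁ t - a₂ t) * N w₂ ^ k / k.factorial) * (N P + T * N q) := by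
  set M := N a₁ * N (fun t => w₁ t ^ k - w₂ t ^ k) / k.factorial
    + N (fun t => a₁ t - a₂ t) * N w₂ ^ k / k.factorial
  have hM : ∀ s ∈ Icc 0 T,
      |a₁ s * (w₁ s ^ k / k.factorial) - a₂ s * (w₂ s ^ k / k.factorial)| ≤ M := fun s hs =>
    abs_mul_pow_div_factorial_sub_le k (hN _ ha₁ s hs) (hN _ (ha₁.sub ha₂) s hs)
      (hN _ ((hw₁.pow k).sub (hw₂.pow k)) s hs) (hN _ hw₂ s hs)
  have hM0 : 0 ≤ M := (abs_nonneg _).trans (hM t ht)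
  have hsub : Icc 0 t ⊆ Icc 0 T := Icc_subset_Icc le_rfl ht.2
  have hint : ∀ {a w : ℝ → ℝ}, ContinuousOn a (Icc 0 T) → ContinuousOn w (Icc 0 T) →
      IntervalIntegrable (fun s => a s * (w s ^ k / k.factorial) * q s) volume 0 t :=
    fun ha hw =>
      (((ha.mul ((hw.pow k).div_const _)).mul hq).mono hsub).intervalIntegrable_of_Icc ht.1
  have hterm : |(-1 : ℝ) ^ (k + 1) * a₁ t * (w₁ t ^ k / k.factorial) * P t
      - (-1 : ℝ) ^ (k + 1) * a₂ t * (w₂ t ^ k / k.factorial) * P t| ≤ M * N P := by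
    rw [abs_neg_one_pow_mul_mul_mul_sub]
    exact mul_le_mul (hM t ht) (hN P hP t ht) (abs_nonneg _) hM0
  have hintegral : |(-1 : ℝ) ^ k * (∫ s in (0:ℝ)..t, a₁ s * (w₁ s ^ k / k.factorial) * q s)
      - (-1 : ℝ) ^ k * (∫ s in (0:ℝ)..t, a₂ s * (w₂ s ^ k / k.factorial) * q s)|
      ≤ T * (M * N q) := by
    rw [← mul_sub, abs_mul, abs_neg_one_pow, one_mul,
      ← intervalIntegral.integral_sub (hint ha₁ hw₁) (hint ha₂ hw₂)]
    refine abs_intervalIntegral_le_mul_of_abs_le ht fun s hs => ?_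
    rw [← sub_mul, abs_mul]
    exact mul_le_mul (hM s hs) (hN q hq s hs) (abs_nonneg _) hM0
  calc _ ≤ M * N P + T * (M * N q) := add_le_add hterm hintegral
    _ = M * (N P + T * N q) := by ring

lemma abs_phiRHS_sub_le {N : (ℝ → ℝ) → ℝ}
    (hN : ∀ g, ContinuousOn g (Icc 0 T) → ∀ t ∈ Icc 0 T, |g t| ≤ N g)
    {w₁ w₂ : ℝ → ℝ} {φ₁ φ₂ : ℕ → ℝ → ℝ}
    (hw₁ : ContinuousOn w₁ (Icc 0 T)) (hw₂ : ContinuousOn w₂ (Icc 0 T))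
    (hφ₁ : ∀ j ≤ n, ContinuousOn (φ₁ j) (Icc 0 T)) (hφ₂ : ∀ j ≤ n, ContinuousOn (φ₂ j) (Icc 0 T))
    (hP : ∀ k ∈ Finset.Icc 1 n, ContinuousOn (shiftedProd f n k) (Icc 0 T))
    (hfd : ∀ k ∈ Finset.Icc 1 n, ContinuousOn (fd n k) (Icc 0 T)) {t : ℝ} (ht : t ∈ Icc 0 T) :
    |phiRHS f fd w₁ φ₁ n t - phiRHS f fd w₂ φ₂ n t|
      ≤ ∑ k ∈ Finset.Icc 1 n,
          (N (φ₁ (n - k)) * N (fun t => w₁ t ^ k - w₂ t ^ k) / k.factorial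
            + N (fun t => φ₁ (n - k) t - φ₂ (n - k) t) * N w₂ ^ k / k.factorial)
          * (N (shiftedProd f n k) + T * N (fd n k)) :=
  (abs_sum_add_sum_sub_le _ _ _ _ _).trans <| Finset.sum_le_sum fun k hk =>
    abs_sub_add_abs_integral_sub_le hN (hφ₁ _ (n.sub_le k)) (hφ₂ _ (n.sub_le k)) hw₁ hw₂
      (hP k hk) (hfd k hk) k ht

end Recursion

/-- The explicit sup-norm estimate from the end of the proof of Theorem 2.1:
with `‖g‖ = sup_{t ∈ [0,T]} |g t|` and `P_k = ∏_{l=1}^k f_{n+1-l}`,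
`‖Φ_n[w₁] − Φ_n[w₂]‖ ≤ Σ_{k=1}^n ( ‖Φ_{n−k}[w₁]‖·‖w₁^k − w₂^k‖/k!
  + ‖Φ_{n−k}[w₁] − Φ_{n−k}[w₂]‖·‖w₂‖^k/k! ) · ( ‖P_k‖ + T‖P_k'‖ )`. -/
theorem stmt11
    (T : ℝ) (hT : 0 < T) (n : ℕ) (hn : 1 ≤ n)
    (f : ℕ → ℝ → ℝ)
    (hf : ∀ i, 1 ≤ i → i ≤ n → ContDiffOn ℝ 1 (f i) (Set.Icc 0 T))
    (fd : ℕ → ℕ → ℝ → ℝ)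
    (hfd : ∀ j k, 1 ≤ k → k ≤ j → j ≤ n → ∀ t ∈ Set.Icc (0:ℝ) T,
      HasDerivWithinAt (fun s => ∏ l ∈ Finset.Icc 1 k, f (j + 1 - l) s)
        (fd j k t) (Set.Icc 0 T) t)
    (Φ : (ℝ → ℝ) → ℕ → ℝ → ℝ)
    (hΦ0 : ∀ u t, Φ u 0 t = 1)
    (hΦ : ∀ u : ℝ → ℝ, ContinuousOn u (Set.Icc 0 T) →
      ∀ j, 1 ≤ j → j ≤ n → ∀ t ∈ Set.Icc (0:ℝ) T,
      Φ u j t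
        = (∑ k ∈ Finset.Icc 1 j,
            (-1 : ℝ) ^ (k + 1) * Φ u (j - k) t
              * (u t ^ k / (Nat.factorial k : ℝ))
              * ∏ l ∈ Finset.Icc 1 k, f (j + 1 - l) t)
        + ∑ k ∈ Finset.Icc 1 j,
            (-1 : ℝ) ^ k *
              ∫ s in (0:ℝ)..t,
                Φ u (j - k) s * (u s ^ k / (Nat.factorial k : ℝ)) * fd j k s)
    (N : (ℝ → ℝ) → ℝ)
    (hN : ∀ g : ℝ → ℝ, N g = ⨆ t : Set.Icc (0:ℝ) T, |g t|)
    (w₁ w₂ : ℝ → ℝ)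
    (hw₁ : ContinuousOn w₁ (Set.Icc 0 T)) (hw₂ : ContinuousOn w₂ (Set.Icc 0 T)) :
    N (fun t => Φ w₁ n t - Φ w₂ n t)
      ≤ ∑ k ∈ Finset.Icc 1 n,
          (N (Φ w₁ (n - k)) * N (fun t => w₁ t ^ k - w₂ t ^ k)
              / (Nat.factorial k : ℝ)
            + N (fun t => Φ w₁ (n - k) t - Φ w₂ (n - k) t) * N w₂ ^ k
              / (Nat.factorial k : ℝ))
          * (N (fun t => ∏ l ∈ Finset.Icc 1 k, f (n + 1 - l) t)
              + T * N (fd n k)) := by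
  have hP : ∀ j ≤ n, ∀ k ∈ Finset.Icc 1 j, ContDiffOn ℝ 1 (shiftedProd f j k) (Icc 0 T) :=
    fun j hjn k hk => contDiffOn_shiftedProd hf (Finset.mem_Icc.1 hk).2 hjn
  have hfdc : ∀ j ≤ n, ∀ k ∈ Finset.Icc 1 j, ContinuousOn (fd j k) (Icc 0 T) := fun j hjn k hk =>
    (hP j hjn k hk).continuousOn_of_hasDerivWithinAt (uniqueDiffOn_Icc hT)
      (hfd j k (Finset.mem_Icc.1 hk).1 (Finset.mem_Icc.1 hk).2 hjn)
  have hΦc : ∀ u, ContinuousOn u (Icc 0 T) → ∀ j ≤ n, ContinuousOn (Φ u j) (Icc 0 T) :=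
    fun u hu => continuousOn_of_eq_phiRHS hu (fun j hj k hk => (hP j hj k hk).continuousOn) hfdc
      (hΦ0 u) (hΦ u hu)
  have hNle : ∀ g, ContinuousOn g (Icc 0 T) → ∀ t ∈ Icc 0 T, |g t| ≤ N g := fun g hg t ht =>
    (hN g).symm ▸ abs_le_iSup_abs_of_continuousOn isCompact_Icc hg ht
  have : Nonempty (Icc 0 T) := ⟨⟨0, left_mem_Icc.2 hT.le⟩⟩
  rw [hN]
  refine ciSup_le fun t => ?_
  rw [hΦ w₁ hw₁ n hn le_rfl t t.2, hΦ w₂ hw₂ n hn le_rfl t t.2]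
  exact abs_phiRHS_sub_le hNle hw₁ hw₂ (hΦc w₁ hw₁) (hΦc w₂ hw₂)
    (fun k hk => (hP n le_rfl k hk).continuousOn) (hfdc n le_rfl) t.2
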